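/- The mean curvature of the fiber π⁻¹({s}) ⊆ Ȟⁿ (s > 0) of the submersion π(x) = xₙ/x₁ with respect to the unit normal ξ = -∇π/‖∇π‖ equals h(s) = (n-1) s/√(1+s²). In particular, the fibers are hypersurfaces of constant mean curvature. -/

import Mathlib

/-!
Both kinds of fields in the orthonormal frame of the fibre are of the form `X y = y₁ • v` with a
constant vector `v`: `v = e_j` for the coordinate fields and `v = (e₁ + s eₙ)/√(1 + s²)` for `T`.
For such a field the conformal change formula gives `∇_X X = x₁ • (⟨v, v⟩ e₁ - v₁ v)`, and on the
fibre `xₙ = s x₁` pairing with `ξ` yields `(s (⟨v, v⟩ - v₁²) + v₁ vₙ) / √(1 + s²)`. This equals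
`s / √(1 + s²)` for each of the `n - 1` frame fields.
-/

namespace EuclideanSpace

variable {ι : Type*}

section lineDirection

variable [DecidableEq ι]

noncomputable def lineDirection (i j : ι) (s : ℝ) : EuclideanSpace ℝ ι :=
  (Real.sqrt (1 + s ^ 2))⁻¹ • (single i 1 + s • single j 1)

theorem lineDirection_apply_left {i j : ι} (hij : i ≠ j) (s : ℝ) :
    lineDirection i j s i = (Real.sqrt (1 + s ^ 2))⁻¹ := by
  simp [lineDirection, hij]

theorem lineDirection_apply_right {i j : ι} (hij : i ≠ j) (s : ℝ) :
    lineDirection i j s j = (Real.sqrt (1 + s ^ 2))⁻¹ * s := by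
  simp [lineDirection, hij.symm]

end lineDirection

variable [Fintype ι]

theorem hasFDerivAt_neg_log_apply {x : EuclideanSpace ℝ ι} {i : ι} (hx : x i ≠ 0) :
    HasFDerivAt (fun y : EuclideanSpace ℝ ι => -Real.log (y i))
      (-((x i)⁻¹ • PiLp.proj (𝕜 := ℝ) 2 (fun _ : ι => ℝ) i)) x :=
  ((Real.hasDerivAt_log hx).comp_hasFDerivAt (f := fun y : EuclideanSpace ℝ ι => y i) x
    (PiLp.hasFDerivAt_apply 2 x i)).neg

theorem fderiv_neg_log_apply {x : EuclideanSpace ℝ ι} {i : ι} (hx : x i ≠ 0)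
    (v : EuclideanSpace ℝ ι) :
    fderiv ℝ (fun y : EuclideanSpace ℝ ι => -Real.log (y i)) x v = -((x i)⁻¹ * v i) := by
  simp [(hasFDerivAt_neg_log_apply hx).fderiv]

theorem fderiv_apply_smul_const (i : ι) (v x w : EuclideanSpace ℝ ι) :
    fderiv ℝ (fun y : EuclideanSpace ℝ ι => y i • v) x w = w i • v := by
  have : (fun y : EuclideanSpace ℝ ι => y i • v)
      = (PiLp.proj (𝕜 := ℝ) 2 (fun _ : ι => ℝ) i).smulRight v := rfl
  rw [this, ContinuousLinearMap.fderiv]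
  rfl

variable [DecidableEq ι]

theorem gradient_apply_div_apply {x : EuclideanSpace ℝ ι} {i : ι} (hx : x i ≠ 0) (j : ι) :
    gradient (fun y : EuclideanSpace ℝ ι => y j / y i) x
      = (x i)⁻¹ • single j 1 - (x j / x i ^ 2) • single i 1 := by
  apply HasGradientAt.gradient
  rw [hasGradientAt_iff_hasFDerivAt]
  have hinv := (hasDerivAt_inv hx).comp_hasFDerivAt x (PiLp.hasFDerivAt_apply (𝕜 := ℝ) 2 x i)
  refine ((PiLp.hasFDerivAt_apply (𝕜 := ℝ) 2 x j).mul hinv).congr_fderiv ?_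
  ext v
  simp only [InnerProductSpace.toDual_apply_apply, inner_sub_left, real_inner_smul_left,
    inner_single_left, conj_trivial, one_mul, add_apply, FunLike.coe_smul, Pi.smul_apply,
    PiLp.proj_apply, smul_eq_mul, Function.comp_apply]
  ring

theorem inner_neg_smul_sq_smul_gradient_div {x : EuclideanSpace ℝ ι} {i : ι} (hx : x i ≠ 0)
    (j : ι) (c : ℝ) (u : EuclideanSpace ℝ ι) :
    inner ℝ u (-(c • (x i ^ 2 • gradient (fun y : EuclideanSpace ℝ ι => y j / y i) x)))
      = c * (x j * u i - x i * u j) := by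
  simp only [gradient_apply_div_apply hx, inner_neg_right, real_inner_smul_right, inner_sub_right,
    inner_single_right, conj_trivial]
  field_simp
  ring

/-- The Levi-Civita connection of `(y i)⁻² ⟨·,·⟩`, by the conformal change formula with
conformal exponent `-log (y i)`. -/
noncomputable def hyperbolicCov (i : ι) (X Y : EuclideanSpace ℝ ι → EuclideanSpace ℝ ι)
    (p : EuclideanSpace ℝ ι) : EuclideanSpace ℝ ι :=
  fderiv ℝ Y p (X p) + (fderiv ℝ (fun y : EuclideanSpace ℝ ι => -Real.log (y i)) p (X p)) • Y p
    + (fderiv ℝ (fun y : EuclideanSpace ℝ ι => -Real.log (y i)) p (Y p)) • X p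
    + ((p i)⁻¹ * (inner ℝ (X p) (Y p) : ℝ)) • single i (1:ℝ)

theorem hyperbolicCov_apply_smul_self {x : EuclideanSpace ℝ ι} {i : ι} (hx : x i ≠ 0)
    (v : EuclideanSpace ℝ ι) :
    hyperbolicCov i (fun y => y i • v) (fun y => y i • v) x
      = x i • ((inner ℝ v v : ℝ) • single i 1 - v i • v) := by
  simp only [hyperbolicCov, fderiv_apply_smul_const, fderiv_neg_log_apply hx, PiLp.smul_apply,
    smul_eq_mul, real_inner_smul_left, real_inner_smul_right, smul_sub, smul_smul]
  field_simp
  module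

theorem inner_hyperbolicCov_smul_self_gradient_div {x : EuclideanSpace ℝ ι} {i j : ι}
    (hij : i ≠ j) (hx : x i ≠ 0) {s : ℝ} (hfib : x j = s * x i) (c : ℝ)
    (v : EuclideanSpace ℝ ι) :
    (x i ^ 2)⁻¹ * inner ℝ (hyperbolicCov i (fun y => y i • v) (fun y => y i • v) x)
        (-(c⁻¹ • (x i ^ 2 • gradient (fun y : EuclideanSpace ℝ ι => y j / y i) x)))
      = (s * (inner ℝ v v - v i ^ 2) + v i * v j) / c := by
  simp only [hyperbolicCov_apply_smul_self hx, inner_neg_smul_sq_smul_gradient_div hx, hfib,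
    PiLp.smul_apply, PiLp.sub_apply, PiLp.single_apply, if_pos, if_neg hij.symm, smul_eq_mul]
  field_simp
  ring

theorem inner_lineDirection_self {i j : ι} (hij : i ≠ j) (s : ℝ) :
    inner ℝ (lineDirection i j s) (lineDirection i j s) = (1 : ℝ) := by
  have hc : 0 < 1 + s ^ 2 := by positivity
  simp only [lineDirection, inner_add_left, real_inner_smul_left, inner_single_left, conj_trivial,
    PiLp.add_apply, PiLp.smul_apply, PiLp.single_apply, if_neg hij, if_neg hij.symm, smul_eq_mul,
    if_true]
  field_simp [(Real.sqrt_pos.2 hc).ne']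
  rw [Real.sq_sqrt hc.le]
  ring

end EuclideanSpace

theorem Finset.card_filter_ne_and_ne {α : Type*} [Fintype α] [DecidableEq α] {a b : α}
    (hab : a ≠ b) :
    (Finset.univ.filter (fun k : α => k ≠ a ∧ k ≠ b)).card = Fintype.card α - 2 := by
  have : Finset.univ.filter (fun k : α => k ≠ a ∧ k ≠ b) = {a, b}ᶜ := by
    ext k
    simp
  rw [this, Finset.card_compl, Finset.card_pair hab]

theorem stmt13 (n : ℕ) (hn : 2 ≤ n) (s : ℝ)
    (x : EuclideanSpace ℝ (Fin n)) (hx1 : 0 < x ⟨0, by omega⟩)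
    (hfib : x ⟨n-1, by omega⟩ = s * x ⟨0, by omega⟩) :
    let i1 : Fin n := ⟨0, by omega⟩
    let iN : Fin n := ⟨n-1, by omega⟩
    let γf : EuclideanSpace ℝ (Fin n) → ℝ := fun y => -Real.log (y i1)
    -- the hyperbolic Levi-Civita connection via the conformal change formula
    let cov : (EuclideanSpace ℝ (Fin n) → EuclideanSpace ℝ (Fin n)) →
        (EuclideanSpace ℝ (Fin n) → EuclideanSpace ℝ (Fin n)) →
        EuclideanSpace ℝ (Fin n) → EuclideanSpace ℝ (Fin n) :=
      fun X Y p => fderiv ℝ Y p (X p) + (fderiv ℝ γf p (X p)) • Y p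
        + (fderiv ℝ γf p (Y p)) • X p
        + ((p i1)⁻¹ * (inner ℝ (X p) (Y p) : ℝ)) • EuclideanSpace.single i1 (1:ℝ)
    -- the hyperbolic metric g = x₁⁻² ⟨·,·⟩
    let gmet : EuclideanSpace ℝ (Fin n) → EuclideanSpace ℝ (Fin n) →
        EuclideanSpace ℝ (Fin n) → ℝ :=
      fun p u v => ((p i1)^2)⁻¹ * (inner ℝ u v : ℝ)
    let πf : EuclideanSpace ℝ (Fin n) → ℝ := fun y => y iN / y i1
    -- ξ = -∇π/‖∇π‖, where ∇π = x₁² · (Euclidean gradient of π) and ‖∇π‖ = √(1+s²)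
    let ξ : EuclideanSpace ℝ (Fin n) :=
      -((Real.sqrt (1+s^2))⁻¹ • ((x i1)^2 • gradient πf x))
    let T : EuclideanSpace ℝ (Fin n) → EuclideanSpace ℝ (Fin n) :=
      fun y => (y i1 / Real.sqrt (1+s^2)) •
        (EuclideanSpace.single i1 (1:ℝ) + s • EuclideanSpace.single iN (1:ℝ))
    -- mean curvature of the fiber: h = Σⱼ g(∇_{eⱼ}eⱼ, ξ) + g(∇_T T, ξ)
    (∑ j ∈ Finset.univ.filter (fun j : Fin n => j ≠ i1 ∧ j ≠ iN),
        gmet x (cov (fun y => (y i1) • EuclideanSpace.single j (1:ℝ))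
                    (fun y => (y i1) • EuclideanSpace.single j (1:ℝ)) x) ξ)
      + gmet x (cov T T x) ξ
      = ((n:ℝ) - 1) * s / Real.sqrt (1+s^2) := by
  intro i1 iN γf cov gmet πf ξ T
  have hi : i1 ≠ iN := by
    simp only [i1, iN, ne_eq, Fin.mk.injEq]
    omega
  have hterm (v : EuclideanSpace ℝ (Fin n)) :
      gmet x (cov (fun y => y i1 • v) (fun y => y i1 • v) x) ξ
        = (s * (inner ℝ v v - v i1 ^ 2) + v i1 * v iN) / Real.sqrt (1 + s ^ 2) :=
    EuclideanSpace.inner_hyperbolicCov_smul_self_gradient_div hi hx1.ne' hfib _ v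
  have hcoord : ∀ j ∈ Finset.univ.filter (fun j : Fin n => j ≠ i1 ∧ j ≠ iN),
      gmet x (cov (fun y => y i1 • EuclideanSpace.single j 1)
        (fun y => y i1 • EuclideanSpace.single j 1) x) ξ = s / Real.sqrt (1 + s ^ 2) := by
    intro j hj
    simp only [Finset.mem_filter, Finset.mem_univ, true_and] at hj
    simp [hterm, hj.1.symm, hj.2.symm]
  have hT : T = fun y => y i1 • EuclideanSpace.lineDirection i1 iN s := by
    funext y
    simp only [T, EuclideanSpace.lineDirection, smul_smul, div_eq_mul_inv]
  rw [Finset.sum_congr rfl hcoord, hT, hterm, Finset.sum_const, Finset.card_filter_ne_and_ne hi,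
    EuclideanSpace.lineDirection_apply_left hi, EuclideanSpace.lineDirection_apply_right hi,
    EuclideanSpace.inner_lineDirection_self hi, Fintype.card_fin, nsmul_eq_mul, Nat.cast_sub hn]
  push_cast
  ring
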